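/- arXiv:2601.09236 — 2 statements merged into one kernel-verified Lean document; each statement's English description precedes it below -/
import Mathlib

section
/- For any integer n > 2, the quantity ε_n = (√(2n) − 2)/(n − 2) satisfies 0 < ε_n < 1/2 when n ≥ 9, and for every ε with 0 ≤ ε < ε_n we have 2(1−ε)²/n > ε². -/
/-!
Put `a = 2 + (n - 2) ε`. The identity `(n - 2) (2 (1 - ε)² - n ε²) = 2n - a²` shows that `ε_n`,
the value of `ε` at which `a = √(2n)`, is the positive root of `2 (1 - ε)² - n ε²`, so this
quadratic is positive on `[0, ε_n)`. The bound `ε_n < 1/2` is `2 √(2n) < n + 2`, i.e. `(n - 2)² > 0`.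
-/

namespace RankingErrorBound

noncomputable def threshold (x : ℝ) : ℝ := (Real.sqrt (2 * x) - 2) / (x - 2)

theorem two_lt_sqrt_two_mul {x : ℝ} (hx : 2 < x) : 2 < Real.sqrt (2 * x) :=
  (Real.lt_sqrt zero_le_two).2 (by linarith)

theorem threshold_pos {x : ℝ} (hx : 2 < x) : 0 < threshold x :=
  div_pos (by linarith [two_lt_sqrt_two_mul hx]) (by linarith)

theorem threshold_lt_half {x : ℝ} (hx : 2 < x) : threshold x < 1 / 2 := by
  have hsqrt : Real.sqrt (2 * x) < (x + 2) / 2 :=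
    (Real.sqrt_lt' (by linarith)).2 (by nlinarith [sq_pos_of_pos (sub_pos.2 hx)])
  rw [threshold, div_lt_iff₀ (by linarith)]
  linarith

theorem mul_sq_lt_of_lt_threshold {x ε : ℝ} (hx : 2 < x) (hε : 0 ≤ ε) (hlt : ε < threshold x) :
    x * ε ^ 2 < 2 * (1 - ε) ^ 2 := by
  have hx2 : 0 < x - 2 := by linarith
  have ha : 2 + (x - 2) * ε < Real.sqrt (2 * x) := by
    rw [threshold, lt_div_iff₀ hx2] at hlt
    linarith
  have ha_sq : (2 + (x - 2) * ε) ^ 2 < 2 * x :=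
    (Real.lt_sqrt (by positivity)).1 ha
  have hidentity : (x - 2) * (2 * (1 - ε) ^ 2 - x * ε ^ 2) = 2 * x - (2 + (x - 2) * ε) ^ 2 := by
    ring
  have hgap : 0 < (x - 2) * (2 * (1 - ε) ^ 2 - x * ε ^ 2) := by
    rw [hidentity]
    linarith
  linarith [pos_of_mul_pos_right hgap hx2.le]

end RankingErrorBound

/-- For `n > 2`, the quantity `ε_n = (√(2n) − 2)/(n − 2)` satisfies
`0 < ε_n < 1/2` when `n ≥ 9`, and for every `ε` with `0 ≤ ε < ε_n` we have
`2(1−ε)²/n > ε²`. -/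
theorem stmt_4 (n : ℕ) (hn : 2 < n) :
    (9 ≤ n → 0 < (Real.sqrt (2 * n) - 2) / ((n : ℝ) - 2) ∧
      (Real.sqrt (2 * n) - 2) / ((n : ℝ) - 2) < 1 / 2) ∧
    (∀ ε : ℝ, 0 ≤ ε → ε < (Real.sqrt (2 * n) - 2) / ((n : ℝ) - 2) →
      2 * (1 - ε)^2 / (n : ℝ) > ε^2) := by
  have hn' : (2 : ℝ) < n := by exact_mod_cast hn
  refine ⟨fun _ => ⟨RankingErrorBound.threshold_pos hn',
    RankingErrorBound.threshold_lt_half hn'⟩, fun ε hε hlt => ?_⟩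
  rw [gt_iff_lt, lt_div_iff₀ (by linarith), mul_comm]
  exact RankingErrorBound.mul_sq_lt_of_lt_threshold hn' hε hlt
end

section
/- Let n ≥ 2 and suppose R̂ : Fin n → ℝ satisfies (1/n)·Σ_i (R̂(i) − i)² ≤ ε² with ε < 1/2 − 1/√(2n) appropriately small so that n·ε² < 2(1−ε)². If R̂(i) = R_G(i) ± e_i with |e_i| ≤ ε where R_G are the exact ranks of an injective G : Fin n → ℝ, then R_G(i) = i for all i, i.e., G is strictly increasing. -/
/-!
The exact ranks of an injective `G` are pairwise distinct numbers below `n`. If they are not the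
identity, some `i` has `RG i ≠ i`, and then by injectivity also `RG (RG i) ≠ RG i`, so at least
two positions are misranked. At a misranked position `k` the soft rank lies within `ε` of the
integer `RG k ≠ k`, hence at distance at least `1 - ε` from the target `k`. The loss is therefore
at least `2 (1 - ε)² / n > ε²`, a contradiction.
-/

open Finset

section Rank

variable {ι α : Type*} [Fintype ι] [LinearOrder α]

def rank (G : ι → α) (i : ι) : ℕ := #{j | G j < G i}

theorem rank_lt_card (G : ι → α) (i : ι) : rank G i < Fintype.card ι :=
  card_lt_univ_of_notMem (x := i) (by simp)

theorem rank_le_rank_of_le {G : ι → α} {i j : ι} (h : G i ≤ G j) : rank G i ≤ rank G j :=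
  card_le_card <| monotone_filter_right _ fun _ _ hk => lt_of_lt_of_le hk h

theorem rank_lt_rank_of_lt {G : ι → α} {i j : ι} (h : G i < G j) : rank G i < rank G j := by
  refine card_lt_card ⟨monotone_filter_right _ fun _ _ hk => hk.trans h, fun hsub => ?_⟩
  have hi : i ∈ ({k | G k < G i} : Finset ι) := hsub (by simpa using h)
  simp at hi

theorem rank_lt_rank_iff {G : ι → α} {i j : ι} : rank G i < rank G j ↔ G i < G j :=
  ⟨fun h => lt_of_not_ge fun hle => (rank_le_rank_of_le hle).not_gt h, rank_lt_rank_of_lt⟩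

theorem rank_injective {G : ι → α} (hG : Function.Injective G) : Function.Injective (rank G) :=
  fun _ _ h => by_contra fun hij => (hG.ne hij).lt_or_gt.elim
    (fun hlt => (rank_lt_rank_of_lt hlt).ne h) (fun hgt => (rank_lt_rank_of_lt hgt).ne' h)

theorem strictMono_of_rank_eq_val {n : ℕ} {G : Fin n → α} (hrank : ∀ i, rank G i = i) :
    StrictMono G := fun i j hij => rank_lt_rank_iff.1 (by rwa [hrank, hrank])

end Rank

theorem one_sub_le_abs_sub_of_abs_sub_le {x a b ε : ℝ} (hab : 1 ≤ |a - b|) (hx : |x - a| ≤ ε) :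
    1 - ε ≤ |x - b| := by
  have := abs_sub_le a x b
  rw [abs_sub_comm a x] at this
  linarith

theorem one_le_abs_natCast_sub_natCast {a b : ℕ} (h : a ≠ b) : (1 : ℝ) ≤ |(a : ℝ) - b| := by
  exact_mod_cast Int.one_le_abs (sub_ne_zero.2 (Int.ofNat_inj.not.2 h))

theorem add_le_sum_of_ne {ι : Type*} [Fintype ι] [DecidableEq ι] {f : ι → ℝ}
    (hf : ∀ k, 0 ≤ f k) {i j : ι} (hij : i ≠ j) : f i + f j ≤ ∑ k, f k := by
  rw [← sum_pair hij]
  exact sum_le_sum_of_subset_of_nonneg (subset_univ _) fun k _ _ => hf k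

open Classical in
theorem stmt_17_general (n : ℕ) (ε : ℝ)
    (hεsmall : ε < 1 / 2 - 1 / Real.sqrt (2 * n))
    (hεkey : (n : ℝ) * ε^2 < 2 * (1 - ε)^2)
    (G : Fin n → ℝ) (hG : Function.Injective G)
    (RG : Fin n → ℕ)
    (hRG : ∀ i, RG i = (Finset.univ.filter (fun j => G j < G i)).card)
    (Rhat : Fin n → ℝ) (hRhat : ∀ i, |Rhat i - (RG i : ℝ)| ≤ ε)
    (hloss : (1 / (n : ℝ)) * ∑ i : Fin n, (Rhat i - (i : ℕ))^2 ≤ ε^2) :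
    (∀ i : Fin n, RG i = (i : ℕ)) ∧ StrictMono G := by
  obtain rfl : RG = rank G := funext fun i => by rw [hRG]; rfl
  have hε : ε ≤ 1 := by
    have : 0 ≤ 1 / Real.sqrt (2 * n) := one_div_nonneg.2 (Real.sqrt_nonneg _)
    linarith
  have hmisranked : ∀ k : Fin n, rank G k ≠ k → (1 - ε) ^ 2 ≤ (Rhat k - (k : ℕ)) ^ 2 :=
    fun k hk => by
      rw [← sq_abs (Rhat k - _)]
      exact pow_le_pow_left₀ (by linarith) (one_sub_le_abs_sub_of_abs_sub_le
        (one_le_abs_natCast_sub_natCast hk) (hRhat k)) 2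
  have hrank : ∀ i : Fin n, rank G i = i := by
    by_contra! ⟨i, hi⟩
    set j : Fin n := ⟨rank G i, by simpa using rank_lt_card G i⟩
    have hji : j ≠ i := fun h => hi (congrArg Fin.val h)
    have hj : rank G j ≠ j := fun h => hji (rank_injective hG h)
    have hsum : ∑ k, (Rhat k - (k : ℕ)) ^ 2 ≤ n * ε ^ 2 := by
      rwa [one_div_mul_eq_div, div_le_iff₀ (by exact_mod_cast i.pos), mul_comm] at hloss
    linarith [add_le_sum_of_ne (fun k => sq_nonneg (Rhat k - (k : ℕ))) hji,
      hmisranked i hi, hmisranked j hj]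
  exact ⟨hrank, strictMono_of_rank_eq_val hrank⟩

open Classical in
/-- Minimality direction of the relaxed theorem: if the soft ranks `R̂` have
per-element error at most `ε` from the exact ranks `R_G` of an injective `G`,
the rMSE loss is at most `ε²`, and `ε` is small enough that
`n·ε² < 2(1−ε)²` (e.g. `ε < 1/2 − 1/√(2n)`), then the exact ranks are the
identity and `G` is strictly increasing. -/
theorem stmt_17 (n : ℕ) (hn : 2 ≤ n) (ε : ℝ) (hε0 : 0 ≤ ε)
    (hεsmall : ε < 1 / 2 - 1 / Real.sqrt (2 * n))
    (hεkey : (n : ℝ) * ε^2 < 2 * (1 - ε)^2)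
    (G : Fin n → ℝ) (hG : Function.Injective G)
    (RG : Fin n → ℕ)
    (hRG : ∀ i, RG i = (Finset.univ.filter (fun j => G j < G i)).card)
    (Rhat : Fin n → ℝ) (hRhat : ∀ i, |Rhat i - (RG i : ℝ)| ≤ ε)
    (hloss : (1 / (n : ℝ)) * ∑ i : Fin n, (Rhat i - (i : ℕ))^2 ≤ ε^2) :
    (∀ i : Fin n, RG i = (i : ℕ)) ∧ StrictMono G :=
  stmt_17_general n ε hεsmall hεkey G hG RG hRG Rhat hRhat hloss
end
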